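/- arXiv:2303.17266 — 2 statements merged into one kernel-verified Lean document; each statement's English description precedes it below -/
import Mathlib

section
/- If X₁,…,X_d are random variables with X_i ~ F_i such that |X₁|,…,|X_d| are comonotonic and ∏_{i=1}^d X_i ≤ 0 almost surely, then E(∏_{i=1}^d X_i) = −E(∏_{i=1}^d G_i⁻¹(U)) and (X₁,…,X_d) attains the minimum of E(Y₁⋯Y_d) over all couplings with Y_i ~ F_i. -/
/-!
Write `Zᵢ = |Xᵢ|` and `νᵢ` for its law. Since `∏ Xᵢ ≤ 0`, `E ∏ Xᵢ = -E ∏ Zᵢ`, while every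
coupling satisfies `E ∏ Yᵢ ≥ -E ∏ |Yᵢ|`; so it suffices that the comonotone vector `Z` maximizes
`E ∏ Wᵢ` among nonnegative vectors with marginals `νᵢ`, with maximum `∫₀¹ ∏ Gᵢ⁻¹`.
By the layer-cake formula on `ℝᵈ`, `E ∏ Wᵢ = ∫_{t ≥ 0} P(∀ i, tᵢ < Wᵢ) dt`, and the Fréchet
bound `P(∀ i, tᵢ < Wᵢ) ≤ minᵢ νᵢ(tᵢ, ∞)` is an equality both for comonotone vectors, whose
upper level sets are nested, and for the quantile vector `(Gᵢ⁻¹(U))ᵢ`.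
-/

open MeasureTheory Set

/-- Generalized inverse (quantile function). -/
noncomputable def quantile (ν : Measure ℝ) (u : ℝ) : ℝ :=
  sInf {x : ℝ | u ≤ (ν (Iic x)).toReal}

/-- A family of random variables is comonotonic if all of them are (a.s.) nondecreasing
functions of a single random variable. -/
def Comonotonic {Ω ι : Type*} [MeasurableSpace Ω] (μ : Measure Ω) (Y : ι → Ω → ℝ) : Prop :=
  ∃ (T : Ω → ℝ) (f : ι → ℝ → ℝ), (∀ i, Monotone (f i)) ∧ ∀ i, ∀ᵐ ω ∂μ, Y i ω = f i (T ω)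

open Filter ProbabilityTheory Topology

theorem lintegral_prod_ofReal_eq_lintegral_meas {ι α : Type*} [Fintype ι] [MeasurableSpace α]
    (m : Measure α) [SFinite m] (W : ι → α → ℝ) (hW : ∀ i, AEMeasurable (W i) m) :
    ∫⁻ a, ∏ i, ENNReal.ofReal (W i a) ∂m
      = ∫⁻ t : ι → ℝ, m {a | ∀ i, t i ∈ Ico 0 (W i a)} ∂Measure.pi fun _ => volume := by
  set E : Set (α × (ι → ℝ)) := {p | ∀ i, p.2 i ∈ Ico 0 (W i p.1)}
  have hE : NullMeasurableSet E (m.prod (Measure.pi fun _ => volume)) := by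
    simp only [E, mem_Ico, ofPred_forall, ofPred_and]
    refine .iInter fun i => .inter ?_ ?_
    · exact (measurableSet_le measurable_const measurable_snd.eval).nullMeasurableSet
    · exact nullMeasurableSet_lt measurable_snd.eval.aemeasurable (hW i).comp_fst
  calc ∫⁻ a, ∏ i, ENNReal.ofReal (W i a) ∂m
      = ∫⁻ a, ∫⁻ t, (Prod.mk a ⁻¹' E).indicator 1 t ∂Measure.pi fun _ => volume ∂m := by
        refine lintegral_congr fun a => ?_
        have hslice : Prod.mk a ⁻¹' E = univ.pi fun i => Ico 0 (W i a) := by ext; simp [E]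
        simp only [Real.volume_Ico, sub_zero, hslice,
          lintegral_indicator_one (MeasurableSet.univ_pi fun i => measurableSet_Ico),
          Measure.pi_pi]
    _ = ∫⁻ t, ∫⁻ a, ((·, t) ⁻¹' E).indicator 1 a ∂m ∂Measure.pi fun _ => volume :=
        lintegral_lintegral_swap (aemeasurable_one.indicator₀ hE)
    _ = _ := by
        refine lintegral_congr fun t => lintegral_indicator_one₀ ?_
        change NullMeasurableSet {a | ∀ i, t i ∈ Ico 0 (W i a)} m
        simp only [mem_Ico, ofPred_forall, ofPred_and]
        exact .iInter fun i => (MeasurableSet.const _).nullMeasurableSet.inter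
          (nullMeasurableSet_lt aemeasurable_const (hW i))

theorem lintegral_prod_ofReal_le_of_measure_le {ι α β : Type*} [Fintype ι] [MeasurableSpace α]
    [MeasurableSpace β] {m : Measure α} {m' : Measure β} [SFinite m] [SFinite m']
    {W : ι → α → ℝ} {W' : ι → β → ℝ} (hW : ∀ i, AEMeasurable (W i) m)
    (hW' : ∀ i, AEMeasurable (W' i) m')
    (h : ∀ t : ι → ℝ, (∀ i, 0 ≤ t i) → m {a | ∀ i, t i < W i a} ≤ m' {b | ∀ i, t i < W' i b}) :
    ∫⁻ a, ∏ i, ENNReal.ofReal (W i a) ∂m ≤ ∫⁻ b, ∏ i, ENNReal.ofReal (W' i b) ∂m' := by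
  rw [lintegral_prod_ofReal_eq_lintegral_meas m W hW,
    lintegral_prod_ofReal_eq_lintegral_meas m' W' hW']
  refine lintegral_mono fun t => ?_
  by_cases ht : ∀ i, 0 ≤ t i
  · simpa only [mem_Ico, ht, true_and] using h t ht
  · obtain ⟨i, hi⟩ := not_forall.1 ht
    have hempty : {a | ∀ i, t i ∈ Ico 0 (W i a)} = ∅ :=
      eq_empty_of_forall_notMem fun a ha => hi (ha i).1
    rw [hempty, measure_empty]
    exact zero_le

theorem measure_iInter_eq_iInf_of_directed {ι α : Type*} [MeasurableSpace α] [Finite ι]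
    [Nonempty ι] (m : Measure α) {A : ι → Set α} (hA : Directed (· ⊇ ·) A) :
    m (⋂ i, A i) = ⨅ i, m (A i) := by
  obtain ⟨z, hz⟩ := hA.finite_le id
  rw [(iInter_subset _ z).antisymm (subset_iInter hz)]
  exact le_antisymm (le_iInf fun i => measure_mono (hz i)) (iInf_le _ z)

theorem Comonotonic.measure_forall_lt {Ω ι : Type*} [MeasurableSpace Ω] [Finite ι] [Nonempty ι]
    {μ : Measure Ω} {Y : ι → Ω → ℝ} (hY : Comonotonic μ Y) (t : ι → ℝ) :
    μ {ω | ∀ i, t i < Y i ω} = ⨅ i, μ {ω | t i < Y i ω} := by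
  obtain ⟨T, f, hf, hYf⟩ := hY
  have hupper : ∀ i, IsUpperSet {s | t i < f i s} := fun i _ _ hab h => h.trans_le (hf i hab)
  have hdir : Directed (· ⊇ ·) fun i => T ⁻¹' {s | t i < f i s} := fun i j =>
    ((hupper i).total (hupper j)).elim (fun h => ⟨i, subset_rfl, preimage_mono h⟩)
      (fun h => ⟨j, preimage_mono h, subset_rfl⟩)
  have hae : ∀ i, {ω | t i < Y i ω} =ᵐ[μ] T ⁻¹' {s | t i < f i s} := fun i =>
    (hYf i).mono fun ω h => congrArg (t i < ·) h
  calc μ {ω | ∀ i, t i < Y i ω} = μ (⋂ i, T ⁻¹' {s | t i < f i s}) := by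
        rw [ofPred_forall]; exact measure_congr (Filter.EventuallyEq.countable_iInter hae)
    _ = ⨅ i, μ {ω | t i < Y i ω} := by
        rw [measure_iInter_eq_iInf_of_directed μ hdir]
        exact iInf_congr fun i => (measure_congr (hae i)).symm

section Quantile

variable (ν : Measure ℝ)

theorem quantile_of_nonpos {u : ℝ} (hu : u ≤ 0) : quantile ν u = 0 := by
  have huniv : {x : ℝ | u ≤ (ν (Iic x)).toReal} = univ :=
    eq_univ_of_forall fun _ => hu.trans ENNReal.toReal_nonneg
  rw [quantile, huniv, Real.sInf_of_not_bddBelow not_bddBelow_univ]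

variable [IsProbabilityMeasure ν]

theorem quantile_eq_sInf_cdf (u : ℝ) : quantile ν u = sInf {x | u ≤ cdf ν x} := by
  simp only [quantile, cdf_eq_real, measureReal_def]

theorem nonneg_of_pos_le_cdf (hν0 : ν (Iio 0) = 0) {u x : ℝ} (hu : 0 < u) (hx : u ≤ cdf ν x) :
    0 ≤ x := by
  by_contra! hx0
  have : ν (Iic x) = 0 := measure_mono_null (Iic_subset_Iio.2 hx0) hν0
  rw [cdf_eq_real, measureReal_def, this, ENNReal.toReal_zero] at hx
  exact hu.not_ge hx

theorem quantile_nonneg (hν0 : ν (Iio 0) = 0) (u : ℝ) : 0 ≤ quantile ν u := by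
  rcases le_or_gt u 0 with hu | hu
  · exact (quantile_of_nonpos ν hu).ge
  · rw [quantile_eq_sInf_cdf]
    exact Real.sInf_nonneg fun x hx => nonneg_of_pos_le_cdf ν hν0 hu hx

theorem quantile_monotoneOn (hν0 : ν (Iio 0) = 0) : MonotoneOn (quantile ν) (Iio 1) := by
  intro u _ v hv huv
  rcases le_or_gt u 0 with hu | hu
  · exact (quantile_of_nonpos ν hu).trans_le (quantile_nonneg ν hν0 v)
  · simp only [quantile_eq_sInf_cdf]
    obtain ⟨x, hx⟩ := ((tendsto_cdf_atTop ν).eventually (eventually_ge_nhds hv)).exists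
    exact csInf_le_csInf ⟨0, fun x hx => nonneg_of_pos_le_cdf ν hν0 hu hx⟩ ⟨x, hx⟩
      fun x hx => huv.trans hx

theorem aemeasurable_quantile (hν0 : ν (Iio 0) = 0) :
    AEMeasurable (quantile ν) (volume.restrict (Icc 0 1)) := by
  rw [← Measure.restrict_congr_set Ico_ae_eq_Icc]
  exact (aemeasurable_restrict_of_monotoneOn measurableSet_Iio
    (quantile_monotoneOn ν hν0)).mono_measure (Measure.restrict_mono (fun _ hx => hx.2) le_rfl)

-- `0 ≤ t` absorbs the junk value `sInf = 0` of a set unbounded below, and `u < 1` keeps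
-- `{x | u ≤ cdf ν x}` nonempty.
theorem lt_quantile_iff {t u : ℝ} (ht : 0 ≤ t) (hu : u < 1) :
    t < quantile ν u ↔ cdf ν t < u := by
  rw [quantile_eq_sInf_cdf]
  set S := {x | u ≤ cdf ν x}
  constructor
  · intro htq
    by_contra! hut
    by_cases hS : BddBelow S
    · exact htq.not_ge (csInf_le hS hut)
    · exact htq.not_ge (Real.sInf_of_not_bddBelow hS ▸ ht)
  · intro hut
    by_contra! hqt
    have hS : S.Nonempty := ((tendsto_cdf_atTop ν).eventually (eventually_ge_nhds hu)).exists
    have hright : ∀ s, t < s → u ≤ cdf ν s := fun s hs => by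
      obtain ⟨y, hy, hys⟩ : ∃ y ∈ S, y < s := by
        by_cases hb : BddBelow S
        · exact (csInf_lt_iff hb hS).1 (hqt.trans_lt hs)
        · exact not_bddBelow_iff.1 hb s
      exact hy.trans (monotone_cdf ν hys.le)
    have hcont : Tendsto (cdf ν) (𝓝[>] t) (𝓝 (cdf ν t)) :=
      ((cdf ν).right_continuous t).mono_left (nhdsWithin_mono _ Ioi_subset_Ici_self)
    exact hut.not_ge (ge_of_tendsto hcont (eventually_nhdsWithin_of_forall hright))

theorem measure_Ioi_eq_ofReal_one_sub_cdf (t : ℝ) : ν (Ioi t) = ENNReal.ofReal (1 - cdf ν t) := by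
  calc ν (Ioi t) = (cdf ν).measure (Ioi t) := by rw [measure_cdf]
    _ = _ := (cdf ν).measure_Ioi (tendsto_cdf_atTop ν) t

end Quantile

theorem volume_forall_lt_quantile {ι : Type*} [Finite ι] [Nonempty ι] (ν : ι → Measure ℝ)
    [∀ i, IsProbabilityMeasure (ν i)] {t : ι → ℝ} (ht : ∀ i, 0 ≤ t i) :
    volume.restrict (Icc 0 1) {u | ∀ i, t i < quantile (ν i) u} = ⨅ i, ν i (Ioi (t i)) := by
  have hset : {u | ∀ i, t i < quantile (ν i) u} ∩ Ico 0 1 = ⋂ i, Ioo (cdf (ν i) (t i)) 1 := by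
    ext u
    simp only [mem_inter_iff, mem_ofPred_eq, mem_Ico, mem_iInter, mem_Ioo]
    constructor
    · rintro ⟨h, -, hu1⟩ i
      exact ⟨(lt_quantile_iff (ν i) (ht i) hu1).1 (h i), hu1⟩
    · intro h
      obtain ⟨i⟩ := ‹Nonempty ι›
      exact ⟨fun j => (lt_quantile_iff (ν j) (ht j) (h j).2).2 (h j).1,
        (cdf_nonneg _ _).trans (h i).1.le, (h i).2⟩
  have hdir : Directed (· ⊇ ·) fun i => Ioo (cdf (ν i) (t i)) 1 :=
    Directed.mono_comp (· ≤ ·) (g := fun c => Ioo c 1) (fun _ _ hab => Ioo_subset_Ioo_left hab)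
      (Std.Total.directed _)
  rw [← Measure.restrict_congr_set Ico_ae_eq_Icc, Measure.restrict_apply' measurableSet_Ico,
    hset, measure_iInter_eq_iInf_of_directed volume hdir]
  exact iInf_congr fun i => by rw [Real.volume_Ioo, measure_Ioi_eq_ofReal_one_sub_cdf]

theorem integral_prod_eq_toReal_lintegral {ι α : Type*} [Fintype ι] [MeasurableSpace α]
    {m : Measure α} {W : ι → α → ℝ} (hW : ∀ i, AEMeasurable (W i) m) (hW0 : ∀ i a, 0 ≤ W i a) :
    ∫ a, ∏ i, W i a ∂m = (∫⁻ a, ∏ i, ENNReal.ofReal (W i a) ∂m).toReal := by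
  rw [integral_eq_lintegral_of_nonneg_ae
    (ae_of_all _ fun a => Finset.prod_nonneg fun i _ => hW0 i a)
    (Finset.aemeasurable_fun_prod _ fun i _ => hW i).aestronglyMeasurable]
  simp only [ENNReal.ofReal_prod_of_nonneg fun i _ => hW0 i _]

theorem map_Iio_eq_zero_of_nonneg {α : Type*} [MeasurableSpace α] (m : Measure α) {W : α → ℝ}
    (hW : Measurable W) (hW0 : ∀ a, 0 ≤ W a) : m.map W (Iio 0) = 0 := by
  rw [Measure.map_apply hW measurableSet_Iio]
  exact measure_mono_null (fun a (ha : W a < 0) => absurd ha (hW0 a).not_gt) measure_empty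

section FrechetBound

variable {Ω ι : Type*} [MeasurableSpace Ω] [Fintype ι] [Nonempty ι] {μ : Measure Ω}
  [IsProbabilityMeasure μ]

theorem lintegral_prod_ofReal_le_quantile {W : ι → Ω → ℝ} (hW : ∀ i, Measurable (W i))
    (hW0 : ∀ i ω, 0 ≤ W i ω) :
    ∫⁻ ω, ∏ i, ENNReal.ofReal (W i ω) ∂μ
      ≤ ∫⁻ u in Icc 0 1, ∏ i, ENNReal.ofReal (quantile (μ.map (W i)) u) := by
  have (i : ι) : IsProbabilityMeasure (μ.map (W i)) :=
    Measure.isProbabilityMeasure_map (hW i).aemeasurable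
  refine lintegral_prod_ofReal_le_of_measure_le (fun i => (hW i).aemeasurable)
    (fun i => aemeasurable_quantile _ (map_Iio_eq_zero_of_nonneg μ (hW i) (hW0 i))) fun t ht => ?_
  rw [volume_forall_lt_quantile _ ht]
  exact le_iInf fun i => (measure_mono fun ω (h : ∀ i, t i < W i ω) => h i).trans_eq
    (Measure.map_apply (hW i) measurableSet_Ioi).symm

theorem Comonotonic.lintegral_prod_ofReal_eq_quantile {Z : ι → Ω → ℝ} (hZ : Comonotonic μ Z)
    (hZm : ∀ i, Measurable (Z i)) (hZ0 : ∀ i ω, 0 ≤ Z i ω) :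
    ∫⁻ ω, ∏ i, ENNReal.ofReal (Z i ω) ∂μ
      = ∫⁻ u in Icc 0 1, ∏ i, ENNReal.ofReal (quantile (μ.map (Z i)) u) := by
  have (i : ι) : IsProbabilityMeasure (μ.map (Z i)) :=
    Measure.isProbabilityMeasure_map (hZm i).aemeasurable
  refine (lintegral_prod_ofReal_le_quantile hZm hZ0).antisymm
    (lintegral_prod_ofReal_le_of_measure_le
      (fun i => aemeasurable_quantile _ (map_Iio_eq_zero_of_nonneg μ (hZm i) (hZ0 i)))
      (fun i => (hZm i).aemeasurable) fun t ht => ?_)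
  rw [volume_forall_lt_quantile _ ht, hZ.measure_forall_lt]
  exact (iInf_congr fun i => Measure.map_apply (hZm i) measurableSet_Ioi).le

theorem Comonotonic.integral_prod_eq_quantile {Z : ι → Ω → ℝ} (hZ : Comonotonic μ Z)
    (hZm : ∀ i, Measurable (Z i)) (hZ0 : ∀ i ω, 0 ≤ Z i ω) :
    ∫ ω, ∏ i, Z i ω ∂μ = ∫ u in Icc 0 1, ∏ i, quantile (μ.map (Z i)) u := by
  have (i : ι) : IsProbabilityMeasure (μ.map (Z i)) :=
    Measure.isProbabilityMeasure_map (hZm i).aemeasurable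
  have hν0 (i : ι) := map_Iio_eq_zero_of_nonneg μ (hZm i) (hZ0 i)
  rw [integral_prod_eq_toReal_lintegral (fun i => (hZm i).aemeasurable) hZ0,
    integral_prod_eq_toReal_lintegral (fun i => aemeasurable_quantile _ (hν0 i))
      (fun i => quantile_nonneg _ (hν0 i)), hZ.lintegral_prod_ofReal_eq_quantile hZm hZ0]

theorem Comonotonic.integral_prod_le {Ω' : Type*} [MeasurableSpace Ω'] {μ' : Measure Ω'}
    [IsProbabilityMeasure μ'] {Z : ι → Ω → ℝ} {W : ι → Ω' → ℝ} (hZ : Comonotonic μ Z)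
    (hZm : ∀ i, Measurable (Z i)) (hZ0 : ∀ i ω, 0 ≤ Z i ω)
    (hZint : Integrable (fun ω => ∏ i, Z i ω) μ) (hWm : ∀ i, Measurable (W i))
    (hW0 : ∀ i ω, 0 ≤ W i ω) (hWZ : ∀ i, μ'.map (W i) = μ.map (Z i)) :
    ∫ ω, ∏ i, W i ω ∂μ' ≤ ∫ ω, ∏ i, Z i ω ∂μ := by
  rw [integral_prod_eq_toReal_lintegral (fun i => (hWm i).aemeasurable) hW0,
    integral_prod_eq_toReal_lintegral (fun i => (hZm i).aemeasurable) hZ0]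
  have hfin : ∫⁻ ω, ∏ i, ENNReal.ofReal (Z i ω) ∂μ ≠ ⊤ := by
    simpa only [ENNReal.ofReal_prod_of_nonneg fun i _ => hZ0 i _] using hZint.lintegral_lt_top.ne
  refine ENNReal.toReal_mono hfin ?_
  calc ∫⁻ ω, ∏ i, ENNReal.ofReal (W i ω) ∂μ'
      ≤ ∫⁻ u in Icc 0 1, ∏ i, ENNReal.ofReal (quantile (μ'.map (W i)) u) :=
        lintegral_prod_ofReal_le_quantile hWm hW0
    _ = ∫⁻ ω, ∏ i, ENNReal.ofReal (Z i ω) ∂μ := by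
        simp only [hWZ, hZ.lintegral_prod_ofReal_eq_quantile hZm hZ0]

end FrechetBound

/-- If the `|X_i|` are comonotonic and `∏ X_i ≤ 0` a.s., then `(X₁,…,X_d)` attains the
minimum expected product among all couplings with the same marginals, and
`E(∏ X_i) = −E(∏ G_i⁻¹(U))` where `G_i` is the distribution function of `|X_i|`. -/
theorem stmt_5 {Ω : Type*} [MeasurableSpace Ω] (μ : Measure Ω) [IsProbabilityMeasure μ]
    (d : ℕ) (X : Fin d → Ω → ℝ) (hm : ∀ i, Measurable (X i))
    (hcom : Comonotonic μ (fun i ω => |X i ω|))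
    (hneg : ∀ᵐ ω ∂μ, ∏ i, X i ω ≤ 0)
    (hInt : Integrable (fun ω => ∏ i, X i ω) μ) :
    (∫ ω, ∏ i, X i ω ∂μ
        = -∫ u in Icc (0:ℝ) 1, ∏ i, quantile (μ.map (fun ω => |X i ω|)) u) ∧
    (∀ (Ω' : Type*) [MeasurableSpace Ω'] (μ' : Measure Ω') [IsProbabilityMeasure μ']
        (Y : Fin d → Ω' → ℝ), (∀ i, Measurable (Y i)) →
        (∀ i, μ'.map (Y i) = μ.map (X i)) →
        Integrable (fun ω => ∏ i, Y i ω) μ' →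
        ∫ ω, ∏ i, X i ω ∂μ ≤ ∫ ω, ∏ i, Y i ω ∂μ') := by
  have : Nonempty (Fin d) := by
    refine Fin.pos_iff_nonempty.1 (Nat.pos_of_ne_zero fun hd => ?_)
    subst hd
    norm_num at hneg
    exact IsProbabilityMeasure.ne_zero μ hneg
  have hX : ∫ ω, ∏ i, X i ω ∂μ = -∫ ω, ∏ i, |X i ω| ∂μ := by
    rw [← integral_neg]
    refine integral_congr_ae (hneg.mono fun ω h => ?_)
    simp only [← Finset.abs_prod, abs_of_nonpos h, neg_neg]
  have hZm (i : Fin d) : Measurable fun ω => |X i ω| := (hm i).abs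
  have hZ0 (i : Fin d) (ω : Ω) : 0 ≤ |X i ω| := abs_nonneg _
  refine ⟨by rw [hX, hcom.integral_prod_eq_quantile hZm hZ0], ?_⟩
  intro Ω' _ μ' _ Y hYm hYX hYint
  have hlaw (i : Fin d) : μ'.map (fun ω => |Y i ω|) = μ.map (fun ω => |X i ω|) := by
    simpa only [Measure.map_map measurable_abs (hYm i), Measure.map_map measurable_abs (hm i),
      Function.comp_def] using congrArg (Measure.map abs) (hYX i)
  calc ∫ ω, ∏ i, X i ω ∂μ = -∫ ω, ∏ i, |X i ω| ∂μ := hX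
    _ ≤ -∫ ω, ∏ i, |Y i ω| ∂μ' := neg_le_neg <| hcom.integral_prod_le hZm hZ0
        (by simpa only [Finset.abs_prod] using hInt.abs)
        (fun i => (hYm i).abs) (fun _ _ => abs_nonneg _) hlaw
    _ ≤ ∫ ω, ∏ i, Y i ω ∂μ' := by
        have hYabs : Integrable (fun ω => ∏ i, |Y i ω|) μ' := by
          simpa only [Finset.abs_prod] using hYint.abs
        rw [← integral_neg]
        refine integral_mono hYabs.neg hYint fun ω => ?_
        simpa only [Finset.abs_prod] using neg_abs_le (∏ i, Y i ω)
end

section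
/- If X₁,…,X_d are nonnegative random variables with X_i ~ F_i, then E(X₁⋯X_d) ≤ E(∏_{i=1}^d F_i⁻¹(U)) where U ~ Uniform[0,1]; i.e., the comonotonic coupling maximizes the expected product of nonnegative random variables with fixed marginals. -/
open MeasureTheory Set

/-!
Writing `∏ xᵢ` as the volume of the box `∏ (0, xᵢ)` and applying Tonelli,
`E ∏ Xᵢ = ∫_{t > 0} P(Xᵢ > tᵢ for all i) dt`. The joint survival probability is at most
`minᵢ P(Xᵢ > tᵢ) = 1 - maxᵢ Fᵢ(tᵢ)` (the Fréchet–Hoeffding bound), and since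
`t < Fᵢ⁻¹(u) ↔ Fᵢ(t) < u` for `u ∈ (0, 1)`, this is exactly the joint survival probability of
the comonotone vector `(Fᵢ⁻¹(U))ᵢ`. Undoing Tonelli for that vector gives `E ∏ Fᵢ⁻¹(U)`.
-/

open ProbabilityTheory Filter

section Quantile

variable (ν : Measure ℝ) [IsProbabilityMeasure ν]

theorem quantile_lt_iff {u : ℝ} (hu₀ : 0 < u) (hu₁ : u < 1) (t : ℝ) :
    t < quantile ν u ↔ cdf ν t < u := by
  have hset : {x : ℝ | u ≤ (ν (Iic x)).toReal} = {x : ℝ | u ≤ cdf ν x} := by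
    ext x; simp [cdf_eq_real, measureReal_def]
  rw [quantile, hset]
  have hne : {x : ℝ | u ≤ cdf ν x}.Nonempty :=
    ((tendsto_cdf_atTop ν).eventually (eventually_ge_nhds hu₁)).exists
  constructor
  · intro h
    by_contra! hc
    obtain ⟨x₀, hx₀⟩ := ((tendsto_cdf_atBot ν).eventually_lt_const hu₀).exists
    have hbdd : BddBelow {x : ℝ | u ≤ cdf ν x} :=
      ⟨x₀, fun x hx => ((monotone_cdf ν).reflect_lt (hx₀.trans_le hx)).le⟩
    exact (csInf_le hbdd hc).not_gt h
  · intro h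
    obtain ⟨y, hyu, hty⟩ := ((((cdf ν).right_continuous t).eventually_lt_const h).filter_mono
      (nhdsWithin_mono t Ioi_subset_Ici_self) |>.and eventually_mem_nhdsWithin).exists
    exact hty.trans_le <| le_csInf hne fun x hx =>
      ((monotone_cdf ν).reflect_lt (hyu.trans_le hx)).le

theorem monotoneOn_quantile : MonotoneOn (quantile ν) (Ioo 0 1) := by
  intro u hu v hv huv
  refine le_of_forall_lt fun t ht => ?_
  rw [quantile_lt_iff ν hu.1 hu.2] at ht
  rw [quantile_lt_iff ν hv.1 hv.2]
  exact ht.trans_le huv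

theorem quantile_nonneg_s11 (h₀ : ∀ᵐ x ∂ν, 0 ≤ x) {u : ℝ} (hu : u ∈ Ioo 0 1) :
    0 ≤ quantile ν u := by
  refine le_of_forall_lt fun t ht => ?_
  rw [quantile_lt_iff ν hu.1 hu.2, cdf_eq_real, measureReal_def,
    measure_mono_null (fun x hx => not_le.mpr (mem_Iic.mp hx |>.trans_lt ht)) (ae_iff.mp h₀),
    ENNReal.toReal_zero]
  exact hu.1

end Quantile

theorem measure_iInter_le_one_sub_iSup_compl {Ω ι : Type*} [MeasurableSpace Ω] [Countable ι]
    (μ : Measure Ω) [IsProbabilityMeasure μ] {s : ι → Set Ω} (hs : ∀ i, MeasurableSet (s i)) :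
    μ (⋂ i, s i) ≤ 1 - ⨆ i, μ (s i)ᶜ := by
  rw [← compl_compl (⋂ i, s i), prob_compl_eq_one_sub (MeasurableSet.iInter hs).compl,
    compl_iInter]
  exact tsub_le_tsub_left (iSup_le fun i => measure_mono (subset_iUnion _ i)) 1

theorem one_sub_iSup_le_volume_forall_lt_quantile {ι : Type*} [Finite ι] (ν : ι → Measure ℝ)
    [∀ i, IsProbabilityMeasure (ν i)] (t : ι → ℝ) :
    1 - ⨆ i, ν i (Iic (t i)) ≤
      volume.restrict (Ioo 0 1) {u | ∀ i, t i < quantile (ν i) u} := by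
  set p := ⨆ i, ν i (Iic (t i))
  have hp : p ≠ ⊤ := ne_top_of_le_ne_top ENNReal.one_ne_top (iSup_le fun i => prob_le_one)
  have hsub : Ioo p.toReal 1 ⊆ {u | ∀ i, t i < quantile (ν i) u} ∩ Ioo 0 1 := by
    intro u hu
    have hu₀ : 0 < u := ENNReal.toReal_nonneg.trans_lt hu.1
    refine ⟨fun i => ?_, hu₀, hu.2⟩
    rw [quantile_lt_iff (ν i) hu₀ hu.2, cdf_eq_real, measureReal_def]
    exact (ENNReal.toReal_mono hp (le_iSup (fun i => ν i (Iic (t i))) i)).trans_lt hu.1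
  calc 1 - p = volume (Ioo p.toReal 1) := by
        rw [Real.volume_Ioo, ENNReal.ofReal_sub _ ENNReal.toReal_nonneg, ENNReal.ofReal_one,
          ENNReal.ofReal_toReal hp]
    _ ≤ _ := by
      rw [Measure.restrict_apply' measurableSet_Ioo]
      exact measure_mono hsub

section LayerCake

variable {ι Ω : Type*} [Fintype ι] [MeasurableSpace Ω] (μ : Measure Ω) [SFinite μ]

theorem lintegral_prod_ofReal_eq_setLIntegral_measure_lt {X : ι → Ω → ℝ}
    (hX : ∀ i, Measurable (X i)) :
    ∫⁻ ω, ∏ i, ENNReal.ofReal (X i ω) ∂μ =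
      ∫⁻ t in univ.pi fun _ => Ioi 0, μ {ω | ∀ i, t i < X i ω} := by
  set S : Set (Ω × (ι → ℝ)) := {p | ∀ i, p.2 i < X i p.1}
  have hS : MeasurableSet S := by
    simp only [S, ofPred_forall]
    exact MeasurableSet.iInter fun i =>
      measurableSet_lt ((measurable_pi_apply i).comp measurable_snd) ((hX i).comp measurable_fst)
  calc ∫⁻ ω, ∏ i, ENNReal.ofReal (X i ω) ∂μ
      = ∫⁻ ω, volume.restrict (univ.pi fun _ => Ioi 0) (Prod.mk ω ⁻¹' S) ∂μ := by
        refine lintegral_congr fun ω => ?_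
        have hslice : Prod.mk ω ⁻¹' S ∩ univ.pi (fun _ => Ioi 0) =
            univ.pi fun i => Ioo 0 (X i ω) := by
          ext t; simp [S, Set.mem_pi, and_comm, forall_and]
        rw [Measure.restrict_apply (measurable_prodMk_left hS), hslice, volume_pi_pi]
        simp [Real.volume_Ioo]
    _ = ∫⁻ t in univ.pi fun _ => Ioi 0, μ {ω | ∀ i, t i < X i ω} := by
        rw [← Measure.prod_apply hS, Measure.prod_apply_symm hS]; rfl

theorem lintegral_prod_ofReal_eq_setLIntegral_measure_lt_of_aemeasurable {X : ι → Ω → ℝ}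
    (hX : ∀ i, AEMeasurable (X i) μ) :
    ∫⁻ ω, ∏ i, ENNReal.ofReal (X i ω) ∂μ =
      ∫⁻ t in univ.pi fun _ => Ioi 0, μ {ω | ∀ i, t i < X i ω} := by
  have hmk : ∀ᵐ ω ∂μ, ∀ i, X i ω = (hX i).mk (X i) ω :=
    ae_all_iff.mpr fun i => (hX i).ae_eq_mk
  calc ∫⁻ ω, ∏ i, ENNReal.ofReal (X i ω) ∂μ
      = ∫⁻ ω, ∏ i, ENNReal.ofReal ((hX i).mk (X i) ω) ∂μ :=
        lintegral_congr_ae (hmk.mono fun ω hω => by simp only [hω])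
    _ = ∫⁻ t in univ.pi fun _ => Ioi 0, μ {ω | ∀ i, t i < (hX i).mk (X i) ω} :=
        lintegral_prod_ofReal_eq_setLIntegral_measure_lt μ fun i => (hX i).measurable_mk
    _ = ∫⁻ t in univ.pi fun _ => Ioi 0, μ {ω | ∀ i, t i < X i ω} := by
        refine lintegral_congr fun t => measure_congr <| eventuallyEq_set.mpr ?_
        filter_upwards [hmk] with ω hω
        simp only [hω]

end LayerCake

theorem lintegral_prod_ofReal_le_setLIntegral_prod_quantile {ι Ω : Type*} [Fintype ι]
    [MeasurableSpace Ω] (μ : Measure Ω) [IsProbabilityMeasure μ] {X : ι → Ω → ℝ}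
    (hX : ∀ i, Measurable (X i)) :
    ∫⁻ ω, ∏ i, ENNReal.ofReal (X i ω) ∂μ ≤
      ∫⁻ u in Ioo 0 1, ∏ i, ENNReal.ofReal (quantile (μ.map (X i)) u) := by
  have : ∀ i, IsProbabilityMeasure (μ.map (X i)) :=
    fun i => Measure.isProbabilityMeasure_map (hX i).aemeasurable
  rw [lintegral_prod_ofReal_eq_setLIntegral_measure_lt μ hX,
    lintegral_prod_ofReal_eq_setLIntegral_measure_lt_of_aemeasurable _ fun i =>
      aemeasurable_restrict_of_monotoneOn measurableSet_Ioo (monotoneOn_quantile _)]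
  refine lintegral_mono fun t => ?_
  calc μ {ω | ∀ i, t i < X i ω} = μ (⋂ i, X i ⁻¹' Ioi (t i)) := by
        congr 1; ext ω; simp
    _ ≤ 1 - ⨆ i, μ (X i ⁻¹' Ioi (t i))ᶜ :=
        measure_iInter_le_one_sub_iSup_compl μ fun i => hX i measurableSet_Ioi
    _ = 1 - ⨆ i, μ.map (X i) (Iic (t i)) := by
        simp only [← preimage_compl, compl_Ioi, Measure.map_apply (hX _) measurableSet_Iic]
    _ ≤ _ := one_sub_iSup_le_volume_forall_lt_quantile _ t

theorem stmt_11_general {Ω : Type*} [MeasurableSpace Ω] (μ : Measure Ω) [IsProbabilityMeasure μ]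
    (d : ℕ) (X : Fin d → Ω → ℝ) (hm : ∀ i, Measurable (X i))
    (hnonneg : ∀ i, ∀ᵐ ω ∂μ, 0 ≤ X i ω)
    (hIntQ : IntegrableOn
      (fun u => ∏ i, quantile (μ.map (X i)) u) (Icc (0:ℝ) 1) volume) :
    ∫ ω, ∏ i, X i ω ∂μ ≤ ∫ u in Icc (0:ℝ) 1, ∏ i, quantile (μ.map (X i)) u := by
  have : ∀ i, IsProbabilityMeasure (μ.map (X i)) :=
    fun i => Measure.isProbabilityMeasure_map (hm i).aemeasurable
  have hX : ∀ᵐ ω ∂μ, ∀ i, 0 ≤ X i ω := ae_all_iff.mpr hnonneg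
  have hQ : ∀ᵐ u ∂volume.restrict (Ioo (0:ℝ) 1), ∀ i, 0 ≤ quantile (μ.map (X i)) u :=
    (ae_restrict_mem measurableSet_Ioo).mono fun u hu i => quantile_nonneg_s11 _
      ((ae_map_iff (hm i).aemeasurable measurableSet_Ici).mpr (hnonneg i)) hu
  rw [integral_Icc_eq_integral_Ioo, integral_eq_lintegral_of_nonneg_ae
    (hX.mono fun ω hω => Finset.prod_nonneg fun i _ => hω i)
    (Finset.measurable_prod _ fun i _ => hm i).aestronglyMeasurable]
  refine ENNReal.toReal_le_of_le_ofReal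
    (integral_nonneg_of_ae (hQ.mono fun u hu => Finset.prod_nonneg fun i _ => hu i)) ?_
  rw [ofReal_integral_eq_lintegral_ofReal (hIntQ.mono_set Ioo_subset_Icc_self)
    (hQ.mono fun u hu => Finset.prod_nonneg fun i _ => hu i)]
  calc ∫⁻ ω, ENNReal.ofReal (∏ i, X i ω) ∂μ = ∫⁻ ω, ∏ i, ENNReal.ofReal (X i ω) ∂μ :=
        lintegral_congr_ae (hX.mono fun ω hω => ENNReal.ofReal_prod_of_nonneg fun i _ => hω i)
    _ ≤ ∫⁻ u in Ioo 0 1, ∏ i, ENNReal.ofReal (quantile (μ.map (X i)) u) :=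
        lintegral_prod_ofReal_le_setLIntegral_prod_quantile μ hm
    _ = ∫⁻ u in Ioo 0 1, ENNReal.ofReal (∏ i, quantile (μ.map (X i)) u) :=
        lintegral_congr_ae <|
          hQ.mono fun u hu => (ENNReal.ofReal_prod_of_nonneg fun i _ => hu i).symm

/-- For nonnegative random variables, the comonotonic coupling maximizes the expected
product: `E(X₁⋯X_d) ≤ E(∏ F_i⁻¹(U))`. -/
theorem stmt_11 {Ω : Type*} [MeasurableSpace Ω] (μ : Measure Ω) [IsProbabilityMeasure μ]
    (d : ℕ) (X : Fin d → Ω → ℝ) (hm : ∀ i, Measurable (X i))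
    (hnonneg : ∀ i, ∀ᵐ ω ∂μ, 0 ≤ X i ω)
    (hInt : Integrable (fun ω => ∏ i, X i ω) μ)
    (hIntQ : IntegrableOn
      (fun u => ∏ i, quantile (μ.map (X i)) u) (Icc (0:ℝ) 1) volume) :
    ∫ ω, ∏ i, X i ω ∂μ ≤ ∫ u in Icc (0:ℝ) 1, ∏ i, quantile (μ.map (X i)) u :=
  stmt_11_general μ d X hm hnonneg hIntQ
end
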